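/- Resource substitution into an application distributes over bag splittings: for resource terms t, a bag c of resource terms, variable x, and bag b, the substitution (t c)⟨b/x⟩ equals the sum over all splittings b = b1 + b2 (counted via 2-partitionings of an enumeration of b) of (t⟨b1/x⟩)(c⟨b2/x⟩), and this definition is independent of the chosen enumeration of b. -/

import Mathlib

inductive RTerm : Type
  | var : ℕ → RTerm
  | lam : ℕ → RTerm → RTerm
  | app : RTerm → List RTerm → RTerm

def sel (b : List RTerm) (p : Fin b.length → Fin 2) (i : Fin 2) : List RTerm :=
  ((List.finRange b.length).filter (fun j => p j = i)).map b.get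

mutual
def subst : RTerm → ℕ → List RTerm → Multiset RTerm
  | .var y, x, b =>
      if y = x then (match b with | [u] => {u} | _ => 0)
      else if b.isEmpty then {RTerm.var y} else 0
  | .lam z t, x, b => (subst t x b).map (RTerm.lam z)
  | .app t c, x, b =>
      ∑ p : Fin b.length → Fin 2,
        (subst t x (sel b p 0)).bind (fun t' =>
          (substBag c x (sel b p 1)).map (fun c' => RTerm.app t' c'))
termination_by t _ _ => sizeOf t

def substBag : List RTerm → ℕ → List RTerm → Multiset (List RTerm)
  | [], _, b => if b.isEmpty then {[]} else 0
  | s :: c, x, b =>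
      ∑ p : Fin b.length → Fin 2,
        (subst s x (sel b p 0)).bind (fun s' =>
          (substBag c x (sel b p 1)).map (fun c' => s' :: c'))
termination_by c _ _ => sizeOf c
end

/-! Permuting the bag permutes each of its splittings, so the sum over splittings is invariant
as soon as the summand only depends on the two parts up to permutation. We check this along the
generators of `List.Perm`, splitting off the part that receives the head of the bag; invariance of
`subst` and `substBag` then follows by a mutual induction on terms. -/

lemma sel_cons (a : RTerm) (l : List RTerm) (k : Fin 2) (q : Fin l.length → Fin 2) (i : Fin 2) :
    sel (a :: l) (Fin.cons k q) i = (if k = i then [a] else []) ++ sel l q i := by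
  simp only [sel, List.length_cons, List.finRange_succ, List.filter_cons,
    List.filter_map, Fin.cons_zero, Function.comp_def, Fin.cons_succ]
  by_cases hk : k = i <;> simp [hk]

lemma sum_splittings_cons {α M : Type*} [AddCommMonoid M] (a : α) (l : List α)
    (g : (Fin (a :: l).length → Fin 2) → M) :
    ∑ p : Fin (a :: l).length → Fin 2, g p
      = ∑ k : Fin 2, ∑ q : Fin l.length → Fin 2, g (Fin.cons k q) := by
  change ∑ p : Fin (l.length + 1) → Fin 2, g p = _
  rw [← (Fin.consEquiv fun _ => Fin 2).sum_comp g, Fintype.sum_prod_type]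
  rfl

lemma sum_sel_perm {M : Type*} [AddCommMonoid M] {b b' : List RTerm} (h : b.Perm b')
    (f : List RTerm → List RTerm → M)
    (hf : ∀ b₁ b₁' b₂ b₂', b₁.Perm b₁' → b₂.Perm b₂' → f b₁ b₂ = f b₁' b₂') :
    ∑ p : Fin b.length → Fin 2, f (sel b p 0) (sel b p 1)
      = ∑ p : Fin b'.length → Fin 2, f (sel b' p 0) (sel b' p 1) := by
  induction h generalizing f with
  | nil => rfl
  | cons a _ ih =>
      simp only [sum_splittings_cons, sel_cons]
      refine Finset.sum_congr rfl fun k _ => ?_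
      exact ih
        (fun b₁ b₂ => f ((if k = 0 then [a] else []) ++ b₁) ((if k = 1 then [a] else []) ++ b₂))
        fun _ _ _ _ h₁ h₂ => hf _ _ _ _ (h₁.append_left _) (h₂.append_left _)
  | swap u v l =>
      simp only [sum_splittings_cons, sel_cons]
      rw [Finset.sum_comm]
      refine Finset.sum_congr rfl fun k₁ _ => Finset.sum_congr rfl fun k₂ _ =>
        Finset.sum_congr rfl fun q _ => hf _ _ _ _ ?_ ?_
      all_goals
        rw [← List.append_assoc, ← List.append_assoc]
        exact List.perm_append_comm.append_right _
  | trans _ _ ih₁ ih₂ => exact (ih₁ f hf).trans (ih₂ f hf)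

lemma subst_var (y x : ℕ) (b : List RTerm) :
    subst (.var y) x b =
      if y = x then (if b.length = 1 then (b : Multiset RTerm) else 0)
      else if b.length = 0 then {RTerm.var y} else 0 := by
  rcases b with _ | ⟨u, _ | ⟨v, l⟩⟩ <;> simp [subst]

mutual
theorem subst_perm (t : RTerm) (x : ℕ) {b b' : List RTerm} (h : b.Perm b') :
    subst t x b = subst t x b' := by
  match t with
  | .var y => simp only [subst_var, h.length_eq, Multiset.coe_eq_coe.2 h]
  | .lam z t => rw [subst, subst, subst_perm t x h]
  | .app t c =>
      rw [subst, subst]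
      exact sum_sel_perm h
        (fun b₁ b₂ => (subst t x b₁).bind fun t' => (substBag c x b₂).map (RTerm.app t'))
        fun _ _ _ _ h₁ h₂ => by rw [subst_perm t x h₁, substBag_perm c x h₂]
termination_by sizeOf t

theorem substBag_perm (c : List RTerm) (x : ℕ) {b b' : List RTerm} (h : b.Perm b') :
    substBag c x b = substBag c x b' := by
  match c with
  | [] => simp only [substBag, List.isEmpty_iff_length_eq_zero, h.length_eq]
  | s :: c =>
      rw [substBag, substBag]
      exact sum_sel_perm h
        (fun b₁ b₂ => (subst s x b₁).bind fun s' => (substBag c x b₂).map (s' :: ·))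
        fun _ _ _ _ h₁ h₂ => by rw [subst_perm s x h₁, substBag_perm c x h₂]
termination_by sizeOf c
end

/-- substitution into an application distributes over bag splittings:
`(t c)⟨b/x⟩` is the sum, over all 2-partitionings `p` of an enumeration of `b`,
of `(t⟨b₁/x⟩)(c⟨b₂/x⟩)`; moreover the result is independent of the chosen
enumeration of the bag `b` (i.e. invariant under permutation of `b`). -/
theorem subst_app (t : RTerm) (c : List RTerm) (x : ℕ) (b b' : List RTerm)
    (h : b.Perm b') :
    subst (RTerm.app t c) x b =
      (∑ p : Fin b.length → Fin 2,
        (subst t x (sel b p 0)).bind (fun t' =>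
          (substBag c x (sel b p 1)).map (fun c' => RTerm.app t' c'))) ∧
    subst (RTerm.app t c) x b = subst (RTerm.app t c) x b' :=
  ⟨by rw [subst], subst_perm _ x h⟩
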